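/- Let G=(V,E) be an undirected connected simple locally finite graph and let x,y be neighboring vertices. Then the Ollivier Ricci curvature satisfies κ(x,y) ≥ −2(1 − 1/d_x − 1/d_y)_+ ; equivalently, κ(x,y) ≥ −2 + 2/d_x + 2/d_y if d_x > 1 and d_y > 1, and κ(x,y) ≥ 0 otherwise. -/
import Mathlib

open SimpleGraph Finset

variable {V : Type*}

/-- The probability measure attached to a vertex `x`: uniform on its neighbors. -/
noncomputable def nbrMeasure (G : SimpleGraph V) [G.LocallyFinite] [DecidableRel G.Adj]
    (x z : V) : ℝ :=
  if G.Adj x z then ((G.degree x : ℝ))⁻¹ else 0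

/-- A coupling (transfer plan) between the measures `m_x` and `m_y`. -/
def IsCoupling (G : SimpleGraph V) [G.LocallyFinite] [DecidableRel G.Adj]
    (x y : V) (ξ : V → V → ℝ) : Prop :=
  (∀ u v, 0 ≤ ξ u v) ∧
  (∀ u v, ξ u v ≠ 0 → G.Adj x u ∧ G.Adj y v) ∧
  (∀ u, ∑ v ∈ G.neighborFinset y, ξ u v = nbrMeasure G x u) ∧
  (∀ v, ∑ u ∈ G.neighborFinset x, ξ u v = nbrMeasure G y v)

/-- The transportation distance `W₁(m_x, m_y)`. -/
noncomputable def W1 (G : SimpleGraph V) [G.LocallyFinite] [DecidableRel G.Adj]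
    (x y : V) : ℝ :=
  sInf { c : ℝ | ∃ ξ : V → V → ℝ, IsCoupling G x y ξ ∧
    c = ∑ u ∈ G.neighborFinset x, ∑ v ∈ G.neighborFinset y, (G.dist u v : ℝ) * ξ u v }

/-- Ollivier's Ricci curvature `κ(x,y) = 1 - W₁(m_x,m_y)/d(x,y)`. -/
noncomputable def ricci (G : SimpleGraph V) [G.LocallyFinite] [DecidableRel G.Adj]
    (x y : V) : ℝ :=
  1 - W1 G x y / (G.dist x y : ℝ)

/-- Positive part of a real number: `a₊ = max a 0`. -/
noncomputable def posPart' (a : ℝ) : ℝ := max a 0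

/-- `♯(x,y)`: the number of common neighbors of `x` and `y`. -/
def triangles (G : SimpleGraph V) [G.LocallyFinite] [DecidableEq V] (x y : V) : ℕ :=
  (G.neighborFinset x ∩ G.neighborFinset y).card

lemma W1_le_of_coupling (G : SimpleGraph V) [G.LocallyFinite] [DecidableRel G.Adj]
    (x y : V) (ξ : V → V → ℝ) (h : IsCoupling G x y ξ) :
    W1 G x y ≤ ∑ u ∈ G.neighborFinset x, ∑ v ∈ G.neighborFinset y,
      (G.dist u v : ℝ) * ξ u v := by
  apply csInf_le
  · refine ⟨0, ?_⟩
    rintro c ⟨ξ', hξ', rfl⟩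
    apply Finset.sum_nonneg
    intro u _
    apply Finset.sum_nonneg
    intro v _
    exact mul_nonneg (by positivity) (hξ'.1 u v)
  · exact ⟨ξ, h, rfl⟩

lemma sum_eq_of (s : Finset V) (x : V) (hx : x ∈ s) (f : V → ℝ) (c1 c2 : ℝ)
    (h1 : f x = c1) (h2 : ∀ v ∈ s, v ≠ x → f v = c2) :
    ∑ v ∈ s, f v = c1 + ((s.card : ℝ) - 1) * c2 := by
  classical
  rw [← Finset.add_sum_erase s f hx, h1]
  have h3 : ∑ v ∈ s.erase x, f v = ∑ _v ∈ s.erase x, c2 :=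
    Finset.sum_congr rfl
      (fun v hv => h2 v (Finset.mem_of_mem_erase hv) (Finset.ne_of_mem_erase hv))
  rw [h3, Finset.sum_const, Finset.card_erase_of_mem hx, nsmul_eq_mul]
  have h4 : 1 ≤ s.card := Finset.card_pos.2 ⟨x, hx⟩
  rw [Nat.cast_sub h4, Nat.cast_one]

/-- On a connected locally finite graph, for neighbors `x ∼ y`,
`κ(x,y) ≥ -2(1 - 1/d_x - 1/d_y)₊`. -/
theorem ricci_lower_bound (G : SimpleGraph V) [G.LocallyFinite] [DecidableRel G.Adj]
    (hG : G.Connected) (x y : V) (hxy : G.Adj x y) :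
    ricci G x y ≥
      -2 * posPart' (1 - 1 / (G.degree x : ℝ) - 1 / (G.degree y : ℝ)) := by
  classical
  have hyx : G.Adj y x := hxy.symm
  have hyN : y ∈ G.neighborFinset x := by simpa using hxy
  have hxN : x ∈ G.neighborFinset y := by simpa using hyx
  have hdx0 : 0 < G.degree x := G.degree_pos_iff_exists_adj x |>.2 ⟨y, hxy⟩
  have hdy0 : 0 < G.degree y := G.degree_pos_iff_exists_adj y |>.2 ⟨x, hyx⟩
  have hdistxy : (G.dist x y : ℝ) = 1 := by
    rw [dist_eq_one_iff_adj.2 hxy]; norm_num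
  set d1 : ℝ := (G.degree x : ℝ) with hd1
  set d2 : ℝ := (G.degree y : ℝ) with hd2
  have hdxR : (0 : ℝ) < d1 := by rw [hd1]; exact_mod_cast hdx0
  have hdyR : (0 : ℝ) < d2 := by rw [hd2]; exact_mod_cast hdy0
  have hd1ne : d1 ≠ 0 := ne_of_gt hdxR
  have hd2ne : d2 ≠ 0 := ne_of_gt hdyR
  have hNycard : ((G.neighborFinset y).card : ℝ) = d2 := by
    rw [G.card_neighborFinset_eq_degree]
  have hNxcard : ((G.neighborFinset x).card : ℝ) = d1 := by
    rw [G.card_neighborFinset_eq_degree]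
  -- reduce to a bound on W1
  have key : ∀ C : ℝ, W1 G x y ≤ C →
      -2 * posPart' (1 - 1 / d1 - 1 / d2) ≤ 1 - C →
      ricci G x y ≥ -2 * posPart' (1 - 1 / d1 - 1 / d2) := by
    intro C hW hC
    unfold ricci
    rw [hdistxy, div_one]
    linarith
  by_cases h1 : G.degree x = 1
  · -- m_x = δ_y; transport it to m_y at cost 1
    have hNx : G.neighborFinset x = {y} := by
      apply Finset.eq_singleton_iff_unique_mem.2
      refine ⟨hyN, fun u hu => ?_⟩
      by_contra hne
      have : 2 ≤ G.degree x := by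
        rw [← G.card_neighborFinset_eq_degree]
        exact Finset.one_lt_card.2 ⟨u, hu, y, hyN, hne⟩
      omega
    set ξ : V → V → ℝ := fun u v => if u = y ∧ G.Adj y v then (d2)⁻¹ else 0 with hξ
    have hcoup : IsCoupling G x y ξ := by
      refine ⟨fun u v => ?_, fun u v h => ?_, fun u => ?_, fun v => ?_⟩
      · simp only [hξ]; split <;> positivity
      · by_cases hc : u = y ∧ G.Adj y v
        · exact ⟨hc.1 ▸ hxy, hc.2⟩
        · simp only [hξ] at h; exact absurd (if_neg hc) h
      · by_cases hu : u = y
        · rw [hu]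
          have e1 : ∑ v ∈ G.neighborFinset y, ξ y v
              = ∑ _v ∈ G.neighborFinset y, (d2)⁻¹ :=
            Finset.sum_congr rfl (fun v hv => by
              have hyv : G.Adj y v := (G.mem_neighborFinset y v).1 hv
              simp [hξ, hyv])
          rw [e1, Finset.sum_const, nsmul_eq_mul, hNycard,
            mul_inv_cancel₀ hd2ne, nbrMeasure, if_pos hxy, h1]
          norm_num
        · have e1 : ∑ v ∈ G.neighborFinset y, ξ u v
              = ∑ _v ∈ G.neighborFinset y, (0 : ℝ) :=
            Finset.sum_congr rfl (fun v hv => by simp [hξ, hu])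
          rw [e1, Finset.sum_const_zero, nbrMeasure, if_neg (fun hadj => hu (by
            have := (G.mem_neighborFinset x u).2 hadj
            rw [hNx] at this; simpa using this))]
      · rw [hNx, Finset.sum_singleton, nbrMeasure, ← hd2]
        by_cases hv : G.Adj y v <;> simp [hξ, hv]
    have hcost : ∑ u ∈ G.neighborFinset x, ∑ v ∈ G.neighborFinset y,
        (G.dist u v : ℝ) * ξ u v = 1 := by
      rw [hNx, Finset.sum_singleton]
      have e1 : ∑ v ∈ G.neighborFinset y, (G.dist y v : ℝ) * ξ y v
          = ∑ _v ∈ G.neighborFinset y, (d2)⁻¹ :=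
        Finset.sum_congr rfl (fun v hv => by
          have hadj : G.Adj y v := (G.mem_neighborFinset y v).1 hv
          rw [dist_eq_one_iff_adj.2 hadj]
          simp [hξ, hadj])
      rw [e1, Finset.sum_const, nsmul_eq_mul, hNycard, mul_inv_cancel₀ hd2ne]
    apply key 1 (hcost ▸ W1_le_of_coupling G x y ξ hcoup)
    have hpos : posPart' (1 - 1 / d1 - 1 / d2) = 0 := by
      rw [posPart', max_eq_right]
      have e2 : 1 / d1 = 1 := by rw [hd1, h1]; norm_num
      have e3 : 0 < 1 / d2 := by positivity
      linarith
    rw [hpos]; norm_num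
  · by_cases h2 : G.degree y = 1
    · -- m_y = δ_x; transport m_x to it at cost 1
      have hNy : G.neighborFinset y = {x} := by
        apply Finset.eq_singleton_iff_unique_mem.2
        refine ⟨hxN, fun u hu => ?_⟩
        by_contra hne
        have : 2 ≤ G.degree y := by
          rw [← G.card_neighborFinset_eq_degree]
          exact Finset.one_lt_card.2 ⟨u, hu, x, hxN, hne⟩
        omega
      set ξ : V → V → ℝ := fun u v => if G.Adj x u ∧ v = x then (d1)⁻¹ else 0 with hξ
      have hcoup : IsCoupling G x y ξ := by
        refine ⟨fun u v => ?_, fun u v h => ?_, fun u => ?_, fun v => ?_⟩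
        · simp only [hξ]; split <;> positivity
        · by_cases hc : G.Adj x u ∧ v = x
          · exact ⟨hc.1, hc.2 ▸ hyx⟩
          · simp only [hξ] at h; exact absurd (if_neg hc) h
        · rw [hNy, Finset.sum_singleton, nbrMeasure, ← hd1]
          by_cases hu : G.Adj x u <;> simp [hξ, hu]
        · by_cases hv : v = x
          · rw [hv]
            have e1 : ∑ u ∈ G.neighborFinset x, ξ u x
                = ∑ _u ∈ G.neighborFinset x, (d1)⁻¹ :=
              Finset.sum_congr rfl (fun u hu => by
                have hxu : G.Adj x u := (G.mem_neighborFinset x u).1 hu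
                simp [hξ, hxu])
            rw [e1, Finset.sum_const, nsmul_eq_mul, hNxcard,
              mul_inv_cancel₀ hd1ne, nbrMeasure, if_pos hyx, h2]
            norm_num
          · have e1 : ∑ u ∈ G.neighborFinset x, ξ u v
                = ∑ _u ∈ G.neighborFinset x, (0 : ℝ) :=
              Finset.sum_congr rfl (fun u hu => by simp [hξ, hv])
            rw [e1, Finset.sum_const_zero, nbrMeasure, if_neg (fun hadj => hv (by
              have := (G.mem_neighborFinset y v).2 hadj
              rw [hNy] at this; simpa using this))]
      have hcost : ∑ u ∈ G.neighborFinset x, ∑ v ∈ G.neighborFinset y,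
          (G.dist u v : ℝ) * ξ u v = 1 := by
        have e1 : ∑ u ∈ G.neighborFinset x, ∑ v ∈ G.neighborFinset y,
            (G.dist u v : ℝ) * ξ u v = ∑ _u ∈ G.neighborFinset x, (d1)⁻¹ :=
          Finset.sum_congr rfl (fun u hu => by
            have hadj : G.Adj x u := (G.mem_neighborFinset x u).1 hu
            rw [hNy, Finset.sum_singleton, dist_eq_one_iff_adj.2 hadj.symm]
            simp [hξ, hadj])
        rw [e1, Finset.sum_const, nsmul_eq_mul, hNxcard, mul_inv_cancel₀ hd1ne]
      apply key 1 (hcost ▸ W1_le_of_coupling G x y ξ hcoup)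
      have hpos : posPart' (1 - 1 / d1 - 1 / d2) = 0 := by
        rw [posPart', max_eq_right]
        have e2 : 1 / d2 = 1 := by rw [hd2, h2]; norm_num
        have e3 : 0 < 1 / d1 := by positivity
        linarith
      rw [hpos]; norm_num
    · -- main case: d1, d2 ≥ 2
      have hdx2 : 2 ≤ G.degree x := by omega
      have hdy2 : 2 ≤ G.degree y := by omega
      have hd1R : (2 : ℝ) ≤ d1 := by rw [hd1]; exact_mod_cast hdx2
      have hd2R : (2 : ℝ) ≤ d2 := by rw [hd2]; exact_mod_cast hdy2
      have hd1' : (0 : ℝ) < d1 - 1 := by linarith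
      have hd2' : (0 : ℝ) < d2 - 1 := by linarith
      have hd1ne' : d1 - 1 ≠ 0 := ne_of_gt hd1'
      have hd2ne' : d2 - 1 ≠ 0 := ne_of_gt hd2'
      have hs0 : (0 : ℝ) ≤ 1 - 1 / d1 - 1 / d2 := by
        have e1 : 1 / d1 ≤ 1 / 2 := by
          apply one_div_le_one_div_of_le <;> linarith
        have e2 : 1 / d2 ≤ 1 / 2 := by
          apply one_div_le_one_div_of_le <;> linarith
        linarith
      set ξ : V → V → ℝ := fun u v =>
        if G.Adj x u ∧ G.Adj y v then
          (if u = y then (if v = x then 0 else (1 / d1) / (d2 - 1))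
           else (if v = x then (1 / d2) / (d1 - 1)
                 else (1 - 1 / d1 - 1 / d2) / ((d1 - 1) * (d2 - 1))))
        else 0 with hξ
      have hξnn : ∀ u v, 0 ≤ ξ u v := by
        intro u v
        simp only [hξ]
        split
        · split
          · split
            · exact le_refl 0
            · positivity
          · split
            · positivity
            · exact div_nonneg hs0 (by positivity)
        · exact le_refl 0
      have hrow : ∀ u, ∑ v ∈ G.neighborFinset y, ξ u v = nbrMeasure G x u := by
        intro u
        by_cases hadj : G.Adj x u
        · by_cases hu : u = y
          · rw [hu, nbrMeasure, if_pos hxy, ← hd1]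
            have e1 : ∑ v ∈ G.neighborFinset y, ξ y v
                = ∑ v ∈ G.neighborFinset y,
                  (if v = x then (0 : ℝ) else (1 / d1) / (d2 - 1)) :=
              Finset.sum_congr rfl (fun v hv => by
                have hyv : G.Adj y v := (G.mem_neighborFinset y v).1 hv
                by_cases hv' : v = x <;> simp [hξ, hxy, hyx, hyv, hv'])
            have e2 := sum_eq_of (G.neighborFinset y) x hxN
              (fun v => if v = x then (0 : ℝ) else (1 / d1) / (d2 - 1))
              0 ((1 / d1) / (d2 - 1)) (if_pos rfl) (fun v _ hv => if_neg hv)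
            rw [e1, e2, hNycard]
            field_simp
            ring
          · rw [nbrMeasure, if_pos hadj, ← hd1]
            have e1 : ∑ v ∈ G.neighborFinset y, ξ u v
                = ∑ v ∈ G.neighborFinset y,
                  (if v = x then (1 / d2) / (d1 - 1)
                   else (1 - 1 / d1 - 1 / d2) / ((d1 - 1) * (d2 - 1))) :=
              Finset.sum_congr rfl (fun v hv => by
                have hyv : G.Adj y v := (G.mem_neighborFinset y v).1 hv
                by_cases hv' : v = x <;> simp [hξ, hadj, hyx, hyv, hu, hv'])
            have e2 := sum_eq_of (G.neighborFinset y) x hxN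
              (fun v => if v = x then (1 / d2) / (d1 - 1)
                else (1 - 1 / d1 - 1 / d2) / ((d1 - 1) * (d2 - 1)))
              ((1 / d2) / (d1 - 1)) ((1 - 1 / d1 - 1 / d2) / ((d1 - 1) * (d2 - 1)))
              (if_pos rfl) (fun v _ hv => if_neg hv)
            rw [e1, e2, hNycard]
            field_simp
            ring
        · have e1 : ∑ v ∈ G.neighborFinset y, ξ u v
              = ∑ _v ∈ G.neighborFinset y, (0 : ℝ) :=
            Finset.sum_congr rfl (fun v hv => by simp [hξ, hadj])
          rw [e1, Finset.sum_const_zero, nbrMeasure, if_neg hadj]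
      have hcol : ∀ v, ∑ u ∈ G.neighborFinset x, ξ u v = nbrMeasure G y v := by
        intro v
        by_cases hadj : G.Adj y v
        · by_cases hv : v = x
          · rw [hv, nbrMeasure, if_pos hyx, ← hd2]
            have e1 : ∑ u ∈ G.neighborFinset x, ξ u x
                = ∑ u ∈ G.neighborFinset x,
                  (if u = y then (0 : ℝ) else (1 / d2) / (d1 - 1)) :=
              Finset.sum_congr rfl (fun u hu => by
                have hxu : G.Adj x u := (G.mem_neighborFinset x u).1 hu
                by_cases hu' : u = y <;> simp [hξ, hxu, hyx, hxy, hu'])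
            have e2 := sum_eq_of (G.neighborFinset x) y hyN
              (fun u => if u = y then (0 : ℝ) else (1 / d2) / (d1 - 1))
              0 ((1 / d2) / (d1 - 1)) (if_pos rfl) (fun u _ hu => if_neg hu)
            rw [e1, e2, hNxcard]
            field_simp
            ring
          · rw [nbrMeasure, if_pos hadj, ← hd2]
            have e1 : ∑ u ∈ G.neighborFinset x, ξ u v
                = ∑ u ∈ G.neighborFinset x,
                  (if u = y then (1 / d1) / (d2 - 1)
                   else (1 - 1 / d1 - 1 / d2) / ((d1 - 1) * (d2 - 1))) :=
              Finset.sum_congr rfl (fun u hu => by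
                have hxu : G.Adj x u := (G.mem_neighborFinset x u).1 hu
                by_cases hu' : u = y <;> simp [hξ, hxu, hadj, hxy, hv, hu'])
            have e2 := sum_eq_of (G.neighborFinset x) y hyN
              (fun u => if u = y then (1 / d1) / (d2 - 1)
                else (1 - 1 / d1 - 1 / d2) / ((d1 - 1) * (d2 - 1)))
              ((1 / d1) / (d2 - 1)) ((1 - 1 / d1 - 1 / d2) / ((d1 - 1) * (d2 - 1)))
              (if_pos rfl) (fun u _ hu => if_neg hu)
            rw [e1, e2, hNxcard]
            field_simp
            ring
        · have e1 : ∑ u ∈ G.neighborFinset x, ξ u v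
              = ∑ _u ∈ G.neighborFinset x, (0 : ℝ) :=
            Finset.sum_congr rfl (fun u hu => by simp [hξ, hadj])
          rw [e1, Finset.sum_const_zero, nbrMeasure, if_neg hadj]
      have hcoup : IsCoupling G x y ξ := by
        refine ⟨hξnn, fun u v h => ?_, hrow, hcol⟩
        by_cases hc : G.Adj x u ∧ G.Adj y v
        · exact hc
        · simp only [hξ] at h; exact absurd (if_neg hc) h
      set g : V → V → ℝ := fun u v =>
        (if u = y then (1 : ℝ) else if v = x then 1 else 3) * ξ u v with hg
      have hterm : ∀ u ∈ G.neighborFinset x, ∀ v ∈ G.neighborFinset y,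
          (G.dist u v : ℝ) * ξ u v ≤ g u v := by
        intro u hu v hv
        have hxu : G.Adj x u := (G.mem_neighborFinset x u).1 hu
        have hyv : G.Adj y v := (G.mem_neighborFinset y v).1 hv
        simp only [hg]
        apply mul_le_mul_of_nonneg_right _ (hξnn u v)
        by_cases hu' : u = y
        · rw [if_pos hu', hu', dist_eq_one_iff_adj.2 hyv]; norm_num
        · rw [if_neg hu']
          by_cases hv' : v = x
          · rw [if_pos hv', hv', dist_eq_one_iff_adj.2 hxu.symm]; norm_num
          · rw [if_neg hv']
            have t1 : G.dist u v ≤ G.dist u x + G.dist x v := hG.dist_triangle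
            have t2 : G.dist x v ≤ G.dist x y + G.dist y v := hG.dist_triangle
            have e1 : G.dist u x = 1 := dist_eq_one_iff_adj.2 hxu.symm
            have e2 : G.dist x y = 1 := dist_eq_one_iff_adj.2 hxy
            have e3 : G.dist y v = 1 := dist_eq_one_iff_adj.2 hyv
            have e4 : G.dist u v ≤ 3 := by omega
            exact_mod_cast e4
      have hcost : ∑ u ∈ G.neighborFinset x, ∑ v ∈ G.neighborFinset y,
          (G.dist u v : ℝ) * ξ u v ≤
          1 / d1 + 1 / d2 + 3 * (1 - 1 / d1 - 1 / d2) := by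
        have step1 : ∑ u ∈ G.neighborFinset x, ∑ v ∈ G.neighborFinset y,
            (G.dist u v : ℝ) * ξ u v ≤
            ∑ u ∈ G.neighborFinset x, ∑ v ∈ G.neighborFinset y, g u v :=
          Finset.sum_le_sum (fun u hu => Finset.sum_le_sum (hterm u hu))
        have inner : ∀ u ∈ G.neighborFinset x,
            ∑ v ∈ G.neighborFinset y, g u v =
            if u = y then 1 / d1
            else (1 / d2) / (d1 - 1)
              + (d2 - 1) * (3 * ((1 - 1 / d1 - 1 / d2) / ((d1 - 1) * (d2 - 1)))) := by
          intro u hu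
          have hxu : G.Adj x u := (G.mem_neighborFinset x u).1 hu
          by_cases hu' : u = y
          · rw [if_pos hu']
            have e0 : ∑ v ∈ G.neighborFinset y, g u v
                = ∑ v ∈ G.neighborFinset y, ξ u v :=
              Finset.sum_congr rfl (fun v hv => by simp [hg, hu'])
            rw [e0, hrow u, nbrMeasure,
              if_pos (show G.Adj x u by rw [hu']; exact hxy), ← hd1, one_div]
          · rw [if_neg hu']
            have e0 : ∑ v ∈ G.neighborFinset y, g u v
                = ∑ v ∈ G.neighborFinset y,
                  (if v = x then (1 / d2) / (d1 - 1)
                   else 3 * ((1 - 1 / d1 - 1 / d2) / ((d1 - 1) * (d2 - 1)))) :=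
              Finset.sum_congr rfl (fun v hv => by
                have hyv : G.Adj y v := (G.mem_neighborFinset y v).1 hv
                by_cases hv' : v = x <;> simp [hg, hξ, hu', hxu, hyx, hyv, hv'])
            have e2 := sum_eq_of (G.neighborFinset y) x hxN
              (fun v => if v = x then (1 / d2) / (d1 - 1)
                else 3 * ((1 - 1 / d1 - 1 / d2) / ((d1 - 1) * (d2 - 1))))
              ((1 / d2) / (d1 - 1))
              (3 * ((1 - 1 / d1 - 1 / d2) / ((d1 - 1) * (d2 - 1))))
              (if_pos rfl) (fun v _ hv => if_neg hv)
            rw [e0, e2, hNycard]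
        have step2 : ∑ u ∈ G.neighborFinset x, ∑ v ∈ G.neighborFinset y, g u v =
            1 / d1 + 1 / d2 + 3 * (1 - 1 / d1 - 1 / d2) := by
          have e3 := sum_eq_of (G.neighborFinset x) y hyN
            (fun u => if u = y then 1 / d1
              else (1 / d2) / (d1 - 1)
                + (d2 - 1) * (3 * ((1 - 1 / d1 - 1 / d2) / ((d1 - 1) * (d2 - 1)))))
            (1 / d1)
            ((1 / d2) / (d1 - 1)
              + (d2 - 1) * (3 * ((1 - 1 / d1 - 1 / d2) / ((d1 - 1) * (d2 - 1)))))
            (if_pos rfl) (fun u _ hu => if_neg hu)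
          rw [Finset.sum_congr rfl inner, e3, hNxcard]
          field_simp
          ring
        exact step1.trans (le_of_eq step2)
      apply key (1 / d1 + 1 / d2 + 3 * (1 - 1 / d1 - 1 / d2))
        ((W1_le_of_coupling G x y ξ hcoup).trans hcost)
      rw [posPart', max_eq_left hs0]
      linarith
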